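/- Assume that for each j = 1,…,m either exactly one of a_{j0},…,a_{jm} is strictly positive, or all of a_{j0},…,a_{jm} are nonnegative, and that for each i = 1,…,n exactly one of (h₀)_{d,i},…,(h_m)_{d,i} is strictly negative. Then for every feasible point (z, w, μ) of program (lw2), setting λ_j := ∑_{k=0}^m a_{jk} μ_k for j = 1,…,m, one has λ = (λ₁,…,λ_m) ∈ [0,∞)^m and −h₀(0) − t(z,w,μ) ≤ G(λ)_gp. Consequently f^A_{gp,g} ≤ s(f,g) (as elements of ℝ ∪ {±∞}). -/

import Mathlib

/-!
The first row of `A` is `e₀`, so `H(μ) = G(λ)` for `λ_j = ∑_k a_{jk} μ_k`, and `λ ≥ 0` is one of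
the constraints of (lw2). Every `α ∈ Δ(G(λ))` lies in `Δ`, and
`|G(λ)_α| ≤ max(H(μ)_α^+, H(μ)_α^−) ≤ w_α`. Hence, after shrinking `z_α` for `|α| = d` until the
inequality constraints of (lw2) become the equalities of (lw) with `G(λ)_α` in place of `w_α`
(possible since `d` is even), `z` is feasible for (lw) for `G(λ)`, with objective at most the
second part of `t`. Finally `G(λ)(0) = −h₀(0) − ∑_j μ_j h_j(0) ≥ −h₀(0) − ∑_j μ_j h_j(0)^+`.
Taking the infimum over the feasible points of (lw2) gives `f^A_{gp,g} ≤ s(f,g)`.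
-/

open MvPolynomial Finset

noncomputable section

/-- `Finset.filter` with classical decidability. -/
def pfilter {β : Type*} (s : Finset β) (q : β → Prop) : Finset β :=
  @Finset.filter β q (fun _ => Classical.propDecidable _) s

/-- `|α| := α₁ + ⋯ + αₙ` for a multi-index `α`. -/
def adeg {n : ℕ} (α : Fin n →₀ ℕ) : ℕ := ∑ i, α i

/-- `Ω(p) := {α : |α| ≤ d, p_α ≠ 0, α ∉ {0, ε₁, …, εₙ}}`. -/
def OmegaSet {n : ℕ} (d : ℕ) (p : MvPolynomial (Fin n) ℝ) : Finset (Fin n →₀ ℕ) :=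
  pfilter p.support (fun α => adeg α ≤ d ∧ α ≠ 0 ∧ ∀ i, α ≠ Finsupp.single i d)

/-- `Δ(p) := {α ∈ Ω(p) : p_α x^α is not a square}`. -/
def DelSet {n : ℕ} (d : ℕ) (p : MvPolynomial (Fin n) ℝ) : Finset (Fin n →₀ ℕ) :=
  pfilter (OmegaSet d p)
    (fun α => ¬ IsSquare ((monomial α (p.coeff α)) : MvPolynomial (Fin n) ℝ))

/-- Feasibility for program (lw) for `p`. -/
def LwFeas {n : ℕ} (d : ℕ) (p : MvPolynomial (Fin n) ℝ)
    (z : (Fin n →₀ ℕ) → Fin n → ℝ) : Prop :=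
  (∀ α ∈ DelSet d p, ∀ i, 0 ≤ z α i ∧ (z α i = 0 ↔ α i = 0)) ∧
  (∀ i, ∑ α ∈ DelSet d p, z α i ≤ p.coeff (Finsupp.single i d)) ∧
  (∀ α ∈ DelSet d p, adeg α = d →
    ∏ i, (z α i / (α i : ℝ)) ^ (α i) = (p.coeff α / (d : ℝ)) ^ d)

/-- The objective function `v` of program (lw). -/
def lwObj {n : ℕ} (d : ℕ) (p : MvPolynomial (Fin n) ℝ)
    (z : (Fin n →₀ ℕ) → Fin n → ℝ) : ℝ :=
  ∑ α ∈ pfilter (DelSet d p) (fun α => adeg α < d),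
    ((d : ℝ) - (adeg α : ℝ)) *
      (((p.coeff α / (d : ℝ)) ^ d * ∏ i, ((α i : ℝ) / z α i) ^ (α i)) ^
        ((1 : ℝ) / ((d : ℝ) - (adeg α : ℝ))))

/-- `ρ(p) ∈ [0,∞]`, the infimum of `v` over the feasible set (`⊤` if infeasible). -/
def lwRho {n : ℕ} (d : ℕ) (p : MvPolynomial (Fin n) ℝ) : EReal :=
  sInf ((fun z => ((lwObj d p z : ℝ) : EReal)) '' {z | LwFeas d p z})

/-- `p_gp := p(0) − ρ(p) ∈ ℝ ∪ {−∞}`. -/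
def lwGp {n : ℕ} (d : ℕ) (p : MvPolynomial (Fin n) ℝ) : EReal :=
  ((eval (0 : Fin n → ℝ) p : ℝ) : EReal) - lwRho d p

/-- `G(λ) := f − ∑ⱼ λⱼ gⱼ`. -/
def polyG {n m : ℕ} (f : MvPolynomial (Fin n) ℝ) (g : Fin m → MvPolynomial (Fin n) ℝ)
    (lam : Fin m → ℝ) : MvPolynomial (Fin n) ℝ :=
  f - ∑ j, C (lam j) * g j

/-- `s(f,g) := sup{G(λ)_gp : λ ∈ [0,∞)^m}`. -/
def sBound {n m : ℕ} (d : ℕ) (f : MvPolynomial (Fin n) ℝ)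
    (g : Fin m → MvPolynomial (Fin n) ℝ) : EReal :=
  sSup ((fun lam => lwGp d (polyG f g lam)) '' {lam : Fin m → ℝ | ∀ j, 0 ≤ lam j})


/-- `h_k := ∑_{j=0}^m a_{jk} g_j` for `gext = (g₀, g₁, …, g_m)` with `g₀ = −f`. -/
def hpoly {n m : ℕ} (gext : Fin (m+1) → MvPolynomial (Fin n) ℝ)
    (A : Fin (m+1) → Fin (m+1) → ℝ) (k : Fin (m+1)) : MvPolynomial (Fin n) ℝ :=
  ∑ j, C (A j k) * gext j

/-- `μ` extended by `μ₀ := 1`. -/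
def muExt {m : ℕ} (mu : Fin m → ℝ) : Fin (m+1) → ℝ := Fin.cons 1 mu

/-- `H(μ) := −∑_{k=0}^m μ_k h_k`. -/
def Hpoly {n m : ℕ} (gext : Fin (m+1) → MvPolynomial (Fin n) ℝ)
    (A : Fin (m+1) → Fin (m+1) → ℝ) (mu : Fin m → ℝ) : MvPolynomial (Fin n) ℝ :=
  - ∑ k, C (muExt mu k) * hpoly gext A k

/-- `H(μ)_α^+ := −∑_{j : (h_j)_α < 0} (h_j)_α μ_j`. -/
def Hplus {n m : ℕ} (gext : Fin (m+1) → MvPolynomial (Fin n) ℝ)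
    (A : Fin (m+1) → Fin (m+1) → ℝ) (mu : Fin m → ℝ) (α : Fin n →₀ ℕ) : ℝ :=
  ∑ j, if (hpoly gext A j).coeff α < 0 then -((hpoly gext A j).coeff α * muExt mu j) else 0

/-- `H(μ)_α^− := ∑_{j : (h_j)_α > 0} (h_j)_α μ_j`. -/
def Hminus {n m : ℕ} (gext : Fin (m+1) → MvPolynomial (Fin n) ℝ)
    (A : Fin (m+1) → Fin (m+1) → ℝ) (mu : Fin m → ℝ) (α : Fin n →₀ ℕ) : ℝ :=
  ∑ j, if 0 < (hpoly gext A j).coeff α then (hpoly gext A j).coeff α * muExt mu j else 0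

/-- `Δ := Δ(f) ∪ Δ(−g₁) ∪ ⋯ ∪ Δ(−g_m)` (note `−g₀ = f`). -/
def DelTot2 {n m : ℕ} (d : ℕ) (gext : Fin (m+1) → MvPolynomial (Fin n) ℝ) :
    Finset (Fin n →₀ ℕ) :=
  Finset.univ.biUnion (fun j : Fin (m+1) => DelSet d (-(gext j)))

/-- Feasibility for program (lw2). -/
def Lw2Feas {n m : ℕ} (d : ℕ) (gext : Fin (m+1) → MvPolynomial (Fin n) ℝ)
    (A : Fin (m+1) → Fin (m+1) → ℝ)
    (z : (Fin n →₀ ℕ) → Fin n → ℝ) (w : (Fin n →₀ ℕ) → ℝ) (mu : Fin m → ℝ) : Prop :=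
  (∀ j, 0 < mu j) ∧
  (∀ α ∈ DelTot2 d gext, ∀ i, 0 ≤ z α i ∧ (z α i = 0 ↔ α i = 0)) ∧
  (∀ α ∈ DelTot2 d gext, 0 < w α) ∧
  (∀ i, ∑ α ∈ DelTot2 d gext, z α i ≤ (Hpoly gext A mu).coeff (Finsupp.single i d)) ∧
  (∀ α ∈ DelTot2 d gext, adeg α = d →
    (w α / (d : ℝ)) ^ d ≤ ∏ i, (z α i / (α i : ℝ)) ^ (α i)) ∧
  (∀ α ∈ DelTot2 d gext, max (Hplus gext A mu α) (Hminus gext A mu α) ≤ w α) ∧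
  (∀ j : Fin (m+1), j ≠ 0 → 0 ≤ ∑ k, A j k * muExt mu k)

/-- The objective function `t` of program (lw2). -/
def lw2Obj {n m : ℕ} (d : ℕ) (gext : Fin (m+1) → MvPolynomial (Fin n) ℝ)
    (A : Fin (m+1) → Fin (m+1) → ℝ)
    (z : (Fin n →₀ ℕ) → Fin n → ℝ) (w : (Fin n →₀ ℕ) → ℝ) (mu : Fin m → ℝ) : ℝ :=
  (∑ j : Fin m, mu j * max (eval (0 : Fin n → ℝ) (hpoly gext A j.succ)) 0) +
  ∑ α ∈ pfilter (DelTot2 d gext) (fun α => adeg α < d),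
    ((d : ℝ) - (adeg α : ℝ)) *
      (((w α / (d : ℝ)) ^ d * ∏ i, ((α i : ℝ) / z α i) ^ (α i)) ^
        ((1 : ℝ) / ((d : ℝ) - (adeg α : ℝ))))

/-- `ρ_A ∈ [0,∞]`, the optimal value of program (lw2) (`⊤` if infeasible). -/
def rhoA {n m : ℕ} (d : ℕ) (gext : Fin (m+1) → MvPolynomial (Fin n) ℝ)
    (A : Fin (m+1) → Fin (m+1) → ℝ) : EReal :=
  sInf ((fun t : ((Fin n →₀ ℕ) → Fin n → ℝ) × ((Fin n →₀ ℕ) → ℝ) × (Fin m → ℝ) =>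
      ((lw2Obj d gext A t.1 t.2.1 t.2.2 : ℝ) : EReal)) ''
    {t | Lw2Feas d gext A t.1 t.2.1 t.2.2})

/-- `f^A_{gp,g} := −h₀(0) − ρ_A ∈ ℝ ∪ {−∞}`. -/
def fAgp {n m : ℕ} (d : ℕ) (gext : Fin (m+1) → MvPolynomial (Fin n) ℝ)
    (A : Fin (m+1) → Fin (m+1) → ℝ) : EReal :=
  ((-(eval (0 : Fin n → ℝ) (hpoly gext A 0)) : ℝ) : EReal) - rhoA d gext A

@[simp]
lemma mem_pfilter {β : Type*} {s : Finset β} {q : β → Prop} {a : β} :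
    a ∈ pfilter s q ↔ a ∈ s ∧ q a := by
  classical
  exact Finset.mem_filter

lemma EReal.coe_sub_sInf_le {c : ℝ} {S : Set EReal} {B : EReal}
    (h : ∀ x ∈ S, (c : EReal) - x ≤ B) : (c : EReal) - sInf S ≤ B := by
  induction B with
  | bot =>
    have hS : sInf S = ⊤ := sInf_eq_top.2 fun x hx => by
      induction x with
      | bot => simpa using h ⊥ hx
      | coe x => exact absurd (h x hx) (by simpa using EReal.coe_ne_bot (c - x))
      | top => rfl
    rw [hS, EReal.sub_top]
  | coe b =>
    have key : ∀ x : EReal, (c : EReal) - x ≤ b ↔ ((c - b : ℝ) : EReal) ≤ x := fun x => by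
      rw [EReal.sub_le_iff_le_add (.inr (EReal.coe_ne_top b)) (.inr (EReal.coe_ne_bot b)),
        EReal.coe_sub, EReal.sub_le_iff_le_add (.inl (EReal.coe_ne_bot b))
          (.inl (EReal.coe_ne_top b)), add_comm]
    exact (key _).2 (le_sInf fun x hx => (key x).1 (h x hx))
  | top => exact le_top

lemma Even.div_pow_le_div_pow {k : ℕ} (hk : Even k) {a b e : ℝ} (h : |a| ≤ b) (he : 0 ≤ e) :
    (a / e) ^ k ≤ (b / e) ^ k := by
  rw [← hk.pow_abs, abs_div, abs_of_nonneg he]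
  exact pow_le_pow_left₀ (by positivity) (div_le_div_of_nonneg_right h he) k

lemma prod_mul_div_pow {n : ℕ} (α : Fin n →₀ ℕ) (c : ℝ) (y : Fin n → ℝ) :
    ∏ i, (c * y i / (α i : ℝ)) ^ (α i) = c ^ adeg α * ∏ i, (y i / (α i : ℝ)) ^ (α i) := by
  simp only [mul_div_assoc, mul_pow, Finset.prod_mul_distrib, Finset.prod_pow_eq_pow_sum, adeg]

lemma exists_pow_mul_eq {d : ℕ} (hd : d ≠ 0) {T Q : ℝ} (hT : 0 < T) (hTQ : T ≤ Q) :
    ∃ c : ℝ, 0 < c ∧ c ≤ 1 ∧ c ^ d * Q = T := by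
  have hQ : 0 < Q := hT.trans_le hTQ
  refine ⟨(T / Q) ^ ((d : ℝ)⁻¹), by positivity,
    Real.rpow_le_one (by positivity) ((div_le_one hQ).2 hTQ) (by positivity), ?_⟩
  rw [Real.rpow_inv_natCast_pow (by positivity) hd, div_mul_cancel₀ _ hQ.ne']

section LwObjective

variable {n : ℕ} {d : ℕ}

/-- The summand at `α` of the objectives `v` (with `c = p_α`) and `t` (with `c = w_α`). -/
def lwTerm (d : ℕ) (c : ℝ) (α : Fin n →₀ ℕ) (y : Fin n → ℝ) : ℝ :=
  ((d : ℝ) - (adeg α : ℝ)) *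
    (((c / (d : ℝ)) ^ d * ∏ i, ((α i : ℝ) / y i) ^ (α i)) ^
      ((1 : ℝ) / ((d : ℝ) - (adeg α : ℝ))))

def lwObjOn (d : ℕ) (D : Finset (Fin n →₀ ℕ)) (c : (Fin n →₀ ℕ) → ℝ)
    (z : (Fin n →₀ ℕ) → Fin n → ℝ) : ℝ :=
  ∑ α ∈ pfilter D (fun α => adeg α < d), lwTerm d (c α) α (z α)

lemma lwObj_eq_lwObjOn (p : MvPolynomial (Fin n) ℝ) (z : (Fin n →₀ ℕ) → Fin n → ℝ) :
    lwObj d p z = lwObjOn d (DelSet d p) p.coeff z := rfl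

lemma lw2Obj_eq_add_lwObjOn {m : ℕ} (gext : Fin (m+1) → MvPolynomial (Fin n) ℝ)
    (A : Fin (m+1) → Fin (m+1) → ℝ) (z : (Fin n →₀ ℕ) → Fin n → ℝ)
    (w : (Fin n →₀ ℕ) → ℝ) (mu : Fin m → ℝ) :
    lw2Obj d gext A z w mu =
      (∑ j : Fin m, mu j * max (eval (0 : Fin n → ℝ) (hpoly gext A j.succ)) 0) +
        lwObjOn d (DelTot2 d gext) w z := rfl

lemma prod_natCast_div_pow_nonneg {α : Fin n →₀ ℕ} {y : Fin n → ℝ} (hy : ∀ i, 0 ≤ y i) :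
    0 ≤ ∏ i, ((α i : ℝ) / y i) ^ (α i) :=
  Finset.prod_nonneg fun i _ => pow_nonneg (div_nonneg (Nat.cast_nonneg _) (hy i)) _

lemma lwTerm_nonneg (hd : Even d) (c : ℝ) {α : Fin n →₀ ℕ} (hα : adeg α < d)
    {y : Fin n → ℝ} (hy : ∀ i, 0 ≤ y i) : 0 ≤ lwTerm d c α y := by
  have hαd : (adeg α : ℝ) < d := by exact_mod_cast hα
  exact mul_nonneg (sub_nonneg.2 hαd.le)
    (Real.rpow_nonneg (mul_nonneg (hd.pow_nonneg _) (prod_natCast_div_pow_nonneg hy)) _)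

lemma lwTerm_le_lwTerm (hd : Even d) {c c' : ℝ} (hc : |c| ≤ c') {α : Fin n →₀ ℕ}
    (hα : adeg α < d) {y : Fin n → ℝ} (hy : ∀ i, 0 ≤ y i) :
    lwTerm d c α y ≤ lwTerm d c' α y := by
  have hαd : (adeg α : ℝ) < d := by exact_mod_cast hα
  have hprod := prod_natCast_div_pow_nonneg (α := α) hy
  refine mul_le_mul_of_nonneg_left (Real.rpow_le_rpow (mul_nonneg (hd.pow_nonneg _) hprod)
    (mul_le_mul_of_nonneg_right (hd.div_pow_le_div_pow hc (Nat.cast_nonneg d)) hprod)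
    (by bound)) (sub_nonneg.2 hαd.le)

lemma lwObjOn_le_lwObjOn (hd : Even d) {D D' : Finset (Fin n →₀ ℕ)} (hDD' : D ⊆ D')
    {c c' : (Fin n →₀ ℕ) → ℝ} (hc : ∀ α ∈ D, |c α| ≤ c' α)
    {z : (Fin n →₀ ℕ) → Fin n → ℝ} (hz : ∀ α ∈ D', ∀ i, 0 ≤ z α i) :
    lwObjOn d D c z ≤ lwObjOn d D' c' z := by
  unfold lwObjOn
  calc ∑ α ∈ pfilter D (fun α => adeg α < d), lwTerm d (c α) α (z α)
      ≤ ∑ α ∈ pfilter D (fun α => adeg α < d), lwTerm d (c' α) α (z α) :=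
        Finset.sum_le_sum fun α hα =>
          lwTerm_le_lwTerm hd (hc α (mem_pfilter.1 hα).1) (mem_pfilter.1 hα).2
            (hz α (hDD' (mem_pfilter.1 hα).1))
    _ ≤ ∑ α ∈ pfilter D' (fun α => adeg α < d), lwTerm d (c' α) α (z α) :=
        Finset.sum_le_sum_of_subset_of_nonneg
          (fun α hα => mem_pfilter.2 ⟨hDD' (mem_pfilter.1 hα).1, (mem_pfilter.1 hα).2⟩)
          fun α hα _ => lwTerm_nonneg hd _ (mem_pfilter.1 hα).2 (hz α (mem_pfilter.1 hα).1)

end LwObjective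

section Hpoly

variable {n m : ℕ} {gext : Fin (m+1) → MvPolynomial (Fin n) ℝ} {A : Fin (m+1) → Fin (m+1) → ℝ}

lemma Hpoly_eq_neg_sum (mu : Fin m → ℝ) :
    Hpoly gext A mu = -∑ j, C (∑ k, A j k * muExt mu k) * gext j := by
  simp only [Hpoly, hpoly, Finset.mul_sum, map_sum, Finset.sum_mul, ← map_mul, ← mul_assoc]
  rw [Finset.sum_comm]
  simp only [mul_comm]

lemma Hpoly_eq_polyG {f : MvPolynomial (Fin n) ℝ} {g : Fin m → MvPolynomial (Fin n) ℝ}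
    (hgext : gext = Fin.cons (-f) g) (hA00 : A 0 0 = 1) (hA0 : ∀ k, k ≠ 0 → A 0 k = 0)
    (mu : Fin m → ℝ) :
    Hpoly gext A mu = polyG f g (fun j => ∑ k, A j.succ k * muExt mu k) := by
  have hrow0 : ∑ k, A 0 k * muExt mu k = 1 := by
    simp [Fin.sum_univ_succ, hA00, hA0 _ (Fin.succ_ne_zero _), muExt]
  rw [Hpoly_eq_neg_sum, Fin.sum_univ_succ, hrow0, hgext]
  simp only [Fin.cons_zero, Fin.cons_succ, polyG, map_one, one_mul]
  ring

lemma coeff_Hpoly (mu : Fin m → ℝ) (α : Fin n →₀ ℕ) :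
    (Hpoly gext A mu).coeff α = Hplus gext A mu α - Hminus gext A mu α := by
  simp only [Hpoly, Hplus, Hminus, coeff_neg, coeff_sum, coeff_C_mul, ← Finset.sum_sub_distrib,
    ← Finset.sum_neg_distrib]
  refine Finset.sum_congr rfl fun k _ => ?_
  rcases lt_trichotomy ((hpoly gext A k).coeff α) 0 with h | h | h
  · rw [if_pos h, if_neg h.not_gt]; ring
  · simp [h]
  · rw [if_neg h.not_gt, if_pos h]; ring

lemma abs_coeff_Hpoly_le {mu : Fin m → ℝ} (hmu : ∀ j, 0 < mu j) (α : Fin n →₀ ℕ) :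
    |(Hpoly gext A mu).coeff α| ≤ max (Hplus gext A mu α) (Hminus gext A mu α) := by
  have hmu' : ∀ k, 0 ≤ muExt mu k := Fin.cases zero_le_one fun j => (hmu j).le
  have hplus : 0 ≤ Hplus gext A mu α := Finset.sum_nonneg fun k _ => by
    split_ifs with h
    · exact neg_nonneg.2 (mul_nonpos_of_nonpos_of_nonneg h.le (hmu' k))
    · rfl
  have hminus : 0 ≤ Hminus gext A mu α := Finset.sum_nonneg fun k _ => by
    split_ifs with h
    · exact mul_nonneg h.le (hmu' k)
    · rfl
  rw [coeff_Hpoly, abs_le]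
  constructor <;> linarith [le_max_left (Hplus gext A mu α) (Hminus gext A mu α),
    le_max_right (Hplus gext A mu α) (Hminus gext A mu α)]

lemma eval_Hpoly (x : Fin n → ℝ) (mu : Fin m → ℝ) :
    eval x (Hpoly gext A mu) =
      -eval x (hpoly gext A 0) - ∑ j, mu j * eval x (hpoly gext A j.succ) := by
  simp only [Hpoly, muExt, Fin.sum_univ_succ, Fin.cons_zero, Fin.cons_succ, C_1, one_mul,
    map_neg, map_add, map_sum, map_mul, eval_C]
  ring

lemma DelSet_polyG_subset {d : ℕ} {f : MvPolynomial (Fin n) ℝ}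
    {g : Fin m → MvPolynomial (Fin n) ℝ} (hgext : gext = Fin.cons (-f) g)
    (hO : ∀ j, OmegaSet d (-(gext j)) = DelSet d (-(gext j))) (lam : Fin m → ℝ) :
    DelSet d (polyG f g lam) ⊆ DelTot2 d gext := by
  intro α hα
  simp only [DelSet, OmegaSet, mem_pfilter] at hα
  obtain ⟨⟨hsupp, hαΩ⟩, -⟩ := hα
  obtain ⟨j, hj⟩ : ∃ j, (-(gext j)).coeff α ≠ 0 := by
    by_contra! h
    subst hgext
    simp only [Fin.forall_fin_succ, Fin.cons_zero, Fin.cons_succ, coeff_neg, neg_eq_zero] at h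
    simp [polyG, coeff_sum, h.1, h.2] at hsupp
  exact Finset.mem_biUnion.2
    ⟨j, Finset.mem_univ j, hO j ▸ mem_pfilter.2 ⟨mem_support_iff.2 hj, hαΩ⟩⟩

end Hpoly

section Rescaling

variable {n d : ℕ}

lemma exists_lwFeas_of_le_prod (hd : d ≠ 0) (hde : Even d) {p : MvPolynomial (Fin n) ℝ}
    {D : Finset (Fin n →₀ ℕ)} (hD : DelSet d p ⊆ D) {z : (Fin n →₀ ℕ) → Fin n → ℝ}
    (hz : ∀ α ∈ D, ∀ i, 0 ≤ z α i ∧ (z α i = 0 ↔ α i = 0))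
    (hsum : ∀ i, ∑ α ∈ D, z α i ≤ p.coeff (Finsupp.single i d))
    (hprod : ∀ α ∈ DelSet d p, adeg α = d →
      (p.coeff α / d) ^ d ≤ ∏ i, (z α i / (α i : ℝ)) ^ (α i)) :
    ∃ z', LwFeas d p z' ∧ ∀ α, adeg α < d → z' α = z α := by
  have hcoeff : ∀ α ∈ DelSet d p, 0 < (p.coeff α / d) ^ d := fun α hα => by
    simp only [DelSet, OmegaSet, mem_pfilter, mem_support_iff] at hα
    exact hde.pow_pos (div_ne_zero hα.1.1 (Nat.cast_ne_zero.2 hd))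
  choose! c hc0 hc1 hcprod using fun α (h : α ∈ DelSet d p ∧ adeg α = d) =>
    exists_pow_mul_eq hd (hcoeff α h.1) (hprod α h.1 h.2)
  refine ⟨fun α i => if adeg α = d then c α * z α i else z α i, ⟨?_, ?_, ?_⟩,
    fun α hα => by simp [hα.ne]⟩
  · intro α hα i
    obtain ⟨hz0, hz0'⟩ := hz α (hD hα) i
    dsimp only
    split_ifs with hdeg
    · have hcα := hc0 α ⟨hα, hdeg⟩
      exact ⟨mul_nonneg hcα.le hz0, by rw [mul_eq_zero, or_iff_right hcα.ne', hz0']⟩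
    · exact ⟨hz0, hz0'⟩
  · intro i
    calc ∑ α ∈ DelSet d p, (if adeg α = d then c α * z α i else z α i)
        ≤ ∑ α ∈ DelSet d p, z α i := Finset.sum_le_sum fun α hα => by
          split_ifs with hdeg
          · exact mul_le_of_le_one_left (hz α (hD hα) i).1 (hc1 α ⟨hα, hdeg⟩)
          · rfl
      _ ≤ ∑ α ∈ D, z α i :=
          Finset.sum_le_sum_of_subset_of_nonneg hD fun α hα _ => (hz α hα i).1
      _ ≤ _ := hsum i
  · intro α hα hdeg
    simp only [hdeg, if_true]
    rw [prod_mul_div_pow, hdeg, hcprod α ⟨hα, hdeg⟩]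

lemma coe_sub_lwObj_le_lwGp {p : MvPolynomial (Fin n) ℝ} {z : (Fin n →₀ ℕ) → Fin n → ℝ}
    (hz : LwFeas d p z) : ((eval (0 : Fin n → ℝ) p - lwObj d p z : ℝ) : EReal) ≤ lwGp d p := by
  rw [EReal.coe_sub, lwGp, lwRho]
  exact EReal.sub_le_sub le_rfl (sInf_le ⟨z, hz, rfl⟩)

end Rescaling

lemma Lw2Feas.sum_mul_muExt_nonneg {n m d : ℕ} {gext : Fin (m+1) → MvPolynomial (Fin n) ℝ}
    {A : Fin (m+1) → Fin (m+1) → ℝ} {z : (Fin n →₀ ℕ) → Fin n → ℝ} {w : (Fin n →₀ ℕ) → ℝ}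
    {mu : Fin m → ℝ} (h : Lw2Feas d gext A z w mu) (j : Fin m) :
    0 ≤ ∑ k, A j.succ k * muExt mu k :=
  h.2.2.2.2.2.2 j.succ j.succ_ne_zero

theorem Lw2Feas.le_lwGp {n m d : ℕ} (hd : d ≠ 0) (hde : Even d) {f : MvPolynomial (Fin n) ℝ}
    {g : Fin m → MvPolynomial (Fin n) ℝ} {gext : Fin (m+1) → MvPolynomial (Fin n) ℝ}
    (hgext : gext = Fin.cons (-f) g) (hO : ∀ j, OmegaSet d (-(gext j)) = DelSet d (-(gext j)))
    {A : Fin (m+1) → Fin (m+1) → ℝ} (hA00 : A 0 0 = 1) (hA0 : ∀ k, k ≠ 0 → A 0 k = 0)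
    {z : (Fin n →₀ ℕ) → Fin n → ℝ} {w : (Fin n →₀ ℕ) → ℝ} {mu : Fin m → ℝ}
    (h : Lw2Feas d gext A z w mu) :
    ((-(eval (0 : Fin n → ℝ) (hpoly gext A 0)) - lw2Obj d gext A z w mu : ℝ) : EReal) ≤
      lwGp d (polyG f g (fun j => ∑ k, A j.succ k * muExt mu k)) := by
  obtain ⟨hmu, hz, -, hsum, hprod, hw, -⟩ := h
  set p := polyG f g (fun j => ∑ k, A j.succ k * muExt mu k)
  have hH : Hpoly gext A mu = p := Hpoly_eq_polyG hgext hA00 hA0 mu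
  have hD : DelSet d p ⊆ DelTot2 d gext := DelSet_polyG_subset hgext hO _
  have hpw : ∀ α ∈ DelTot2 d gext, |p.coeff α| ≤ w α := fun α hα => by
    rw [← hH]
    exact (abs_coeff_Hpoly_le hmu α).trans (hw α hα)
  obtain ⟨z', hz', hz'z⟩ := exists_lwFeas_of_le_prod hd hde hD hz (hH ▸ hsum) fun α hα hdeg =>
    (hde.div_pow_le_div_pow (hpw α (hD hα)) (Nat.cast_nonneg d)).trans (hprod α (hD hα) hdeg)
  have hobj : lwObj d p z' ≤ lwObjOn d (DelTot2 d gext) w z := by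
    rw [lwObj_eq_lwObjOn, lwObjOn,
      Finset.sum_congr rfl fun α hα => by rw [hz'z α (mem_pfilter.1 hα).2]]
    exact lwObjOn_le_lwObjOn hde hD (fun α hα => hpw α (hD hα)) fun α hα i => (hz α hα i).1
  have heval : eval 0 p = -eval 0 (hpoly gext A 0) - ∑ j, mu j * eval 0 (hpoly gext A j.succ) := by
    rw [← hH, eval_Hpoly]
  have hmax : ∑ j, mu j * eval 0 (hpoly gext A j.succ) ≤
      ∑ j, mu j * max (eval 0 (hpoly gext A j.succ)) 0 :=
    Finset.sum_le_sum fun j _ => mul_le_mul_of_nonneg_left (le_max_left _ _) (hmu j).le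
  refine le_trans (EReal.coe_le_coe_iff.2 ?_) (coe_sub_lwObj_le_lwGp hz')
  rw [lw2Obj_eq_add_lwObjOn]
  linarith

theorem stmt5_general {n m : ℕ} (d : ℕ)
    (f : MvPolynomial (Fin n) ℝ) (g : Fin m → MvPolynomial (Fin n) ℝ)
    (hd2 : 2 ≤ d) (hde : Even d)
    (gext : Fin (m+1) → MvPolynomial (Fin n) ℝ) (hgext : gext = Fin.cons (-f) g)
    (hO : ∀ j, OmegaSet d (-(gext j)) = DelSet d (-(gext j)))
    (A : Fin (m+1) → Fin (m+1) → ℝ) (hA00 : A 0 0 = 1) (hA0 : ∀ k, k ≠ 0 → A 0 k = 0) :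
    (∀ z w mu, Lw2Feas d gext A z w mu →
      (∀ j : Fin m, 0 ≤ ∑ k, A j.succ k * muExt mu k) ∧
      ((( -(eval (0 : Fin n → ℝ) (hpoly gext A 0)) - lw2Obj d gext A z w mu : ℝ) : EReal) ≤
        lwGp d (polyG f g (fun j => ∑ k, A j.succ k * muExt mu k)))) ∧
    fAgp d gext A ≤ sBound d f g := by
  have hd : d ≠ 0 := by omega
  refine ⟨fun z w mu h => ⟨h.sum_mul_muExt_nonneg, h.le_lwGp hd hde hgext hO hA00 hA0⟩, ?_⟩
  refine EReal.coe_sub_sInf_le ?_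
  rintro _ ⟨⟨z, w, mu⟩, h, rfl⟩
  exact (h.le_lwGp hd hde hgext hO hA00 hA0).trans (le_sSup ⟨_, h.sum_mul_muExt_nonneg, rfl⟩)

/-- Theorem (change of variables): under the sign hypotheses on `A` and on the `(h_k)_{d,i}`,
every feasible point of (lw2) yields `λ ∈ [0,∞)^m` with `−h₀(0) − t(z,w,μ) ≤ G(λ)_gp`;
consequently `f^A_{gp,g} ≤ s(f,g)`. -/
theorem stmt5 {n m : ℕ} (hn : 1 ≤ n) (d : ℕ)
    (f : MvPolynomial (Fin n) ℝ) (g : Fin m → MvPolynomial (Fin n) ℝ)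
    (hd2 : 2 ≤ d) (hde : Even d) (hdf : f.totalDegree ≤ d)
    (hdg : ∀ j, (g j).totalDegree ≤ d)
    (hdLeast : ∀ d' : ℕ, Even d' → 2 ≤ d' → f.totalDegree ≤ d' →
      (∀ j, (g j).totalDegree ≤ d') → d ≤ d')
    (gext : Fin (m+1) → MvPolynomial (Fin n) ℝ) (hgext : gext = Fin.cons (-f) g)
    (hO : ∀ j, OmegaSet d (-(gext j)) = DelSet d (-(gext j)))
    (A : Fin (m+1) → Fin (m+1) → ℝ) (hA00 : A 0 0 = 1) (hA0 : ∀ k, k ≠ 0 → A 0 k = 0)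
    (hArows : ∀ j : Fin (m+1), j ≠ 0 →
      (∃! k, 0 < A j k) ∨ (∀ k, 0 ≤ A j k))
    (hneg : ∀ i : Fin n, ∃! k : Fin (m+1),
      (hpoly gext A k).coeff (Finsupp.single i d) < 0) :
    (∀ z w mu, Lw2Feas d gext A z w mu →
      (∀ j : Fin m, 0 ≤ ∑ k, A j.succ k * muExt mu k) ∧
      ((( -(eval (0 : Fin n → ℝ) (hpoly gext A 0)) - lw2Obj d gext A z w mu : ℝ) : EReal) ≤
        lwGp d (polyG f g (fun j => ∑ k, A j.succ k * muExt mu k)))) ∧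
    fAgp d gext A ≤ sBound d f g :=
  stmt5_general d f g hd2 hde gext hgext hO A hA00 hA0
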